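/- arXiv:1803.06604 — 5 statements merged into one kernel-verified Lean document; each statement's English description precedes it below -/
import Mathlib

section
/- Let μ₊, μ₋ be probability measures on ℝ^p, let π ∈ [0,1), let μ = π·μ₊ + (1−π)·μ₋, and let f : ℝ^p → ℝ be measurable with (μ₊ ⊗ μ₊){(x, x') : f(x) ≥ f(x')} = 1/2. Then AUC(f; μ₊, μ₋) = (1−π)⁻¹·(BAUC(f; μ₊, μ) − π/2). -/
open MeasureTheory
open scoped NNReal ENNReal

namespace MeasureTheory.Measure

variable {α β : Type*} [MeasurableSpace α] [MeasurableSpace β]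

lemma prod_mixture_real (μ : Measure α) (ν₁ ν₂ : Measure β) [IsFiniteMeasure μ]
    [IsFiniteMeasure ν₁] [IsFiniteMeasure ν₂] (a b : ℝ≥0) (s : Set (α × β)) :
    (μ.prod (a • ν₁ + b • ν₂)).real s = a * (μ.prod ν₁).real s + b * (μ.prod ν₂).real s := by
  rw [prod_add, prod_smul_right, prod_smul_right, measureReal_add_apply,
    measureReal_nnreal_smul_apply, measureReal_nnreal_smul_apply]

end MeasureTheory.Measure

theorem stmt2_general (p : ℕ) (μp μm : Measure (Fin p → ℝ))
    [IsProbabilityMeasure μp] [IsProbabilityMeasure μm]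
    (π : ℝ≥0) (hπ : π < 1)
    (μ : Measure (Fin p → ℝ)) (hμ : μ = π • μp + (1 - π) • μm)
    (f : (Fin p → ℝ) → ℝ)
    (hhalf : (μp.prod μp) {q : (Fin p → ℝ) × (Fin p → ℝ) | f q.1 ≥ f q.2} = 1 / 2) :
    ((μp.prod μm) {q : (Fin p → ℝ) × (Fin p → ℝ) | f q.1 ≥ f q.2}).toReal
      = (1 - (π : ℝ))⁻¹ *
        (((μp.prod μ) {q : (Fin p → ℝ) × (Fin p → ℝ) | f q.1 ≥ f q.2}).toReal
          - (π : ℝ) / 2) := by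
  set S := {q : (Fin p → ℝ) × (Fin p → ℝ) | f q.1 ≥ f q.2}
  have hπ_ne : 1 - (π : ℝ) ≠ 0 := sub_ne_zero.mpr (by exact_mod_cast hπ.ne')
  have hmix : (μp.prod μ).real S = π * (1 / 2) + (1 - π) * (μp.prod μm).real S := by
    rw [hμ, Measure.prod_mixture_real, Measure.real, hhalf, NNReal.coe_sub hπ.le]
    norm_num
  rw [← Measure.real, ← Measure.real, hmix]
  field_simp
  ring

/-- For probability measures `μp`, `μm` on ℝ^p, `π ∈ [0,1)`, the mixture
`μ = π • μp + (1 - π) • μm`, and measurable `f` with `(μp ⊗ μp){f x ≥ f x'} = 1/2`,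
`AUC(f; μp, μm) = (1 - π)⁻¹ * (BAUC(f; μp, μ) - π/2)`. -/
theorem stmt2 (p : ℕ) (μp μm : Measure (Fin p → ℝ))
    [IsProbabilityMeasure μp] [IsProbabilityMeasure μm]
    (π : ℝ≥0) (hπ : π < 1)
    (μ : Measure (Fin p → ℝ)) (hμ : μ = π • μp + (1 - π) • μm)
    (f : (Fin p → ℝ) → ℝ) (hf : Measurable f)
    (hhalf : (μp.prod μp) {q : (Fin p → ℝ) × (Fin p → ℝ) | f q.1 ≥ f q.2} = 1 / 2) :
    ((μp.prod μm) {q : (Fin p → ℝ) × (Fin p → ℝ) | f q.1 ≥ f q.2}).toReal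
      = (1 - (π : ℝ))⁻¹ *
        (((μp.prod μ) {q : (Fin p → ℝ) × (Fin p → ℝ) | f q.1 ≥ f q.2}).toReal
          - (π : ℝ) / 2) :=
  stmt2_general p μp μm π hπ μ hμ f hhalf
end

section
/- Let μ₊, μ₋ be probability measures on ℝ^p, let π ∈ [0,1), and let μ = π·μ₊ + (1−π)·μ₋. Let f, g : ℝ^p → ℝ be measurable functions with (μ₊ ⊗ μ₊){(x, x') : f(x) ≥ f(x')} = 1/2 and (μ₊ ⊗ μ₊){(x, x') : g(x) ≥ g(x')} = 1/2. Then BAUC(f; μ₊, μ) ≤ BAUC(g; μ₊, μ) if and only if AUC(f; μ₊, μ₋) ≤ AUC(g; μ₊, μ₋). In particular, a maximizer of BAUC over any family of such scoring functions is also a maximizer of AUC over that family. -/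
open MeasureTheory
open scoped NNReal ENNReal

lemma prod_smul_right' {α β : Type*} [MeasurableSpace α] [MeasurableSpace β]
    (μ : Measure α) (ν : Measure β) [SFinite μ] [SFinite ν] (c : ℝ≥0∞) (hc : c ≠ ⊤) :
    μ.prod (c • ν) = c • μ.prod ν := by
  ext s hs
  rw [Measure.smul_apply, Measure.prod_apply hs, Measure.prod_apply hs]
  simp only [Measure.smul_apply, smul_eq_mul]
  rw [lintegral_const_mul' _ _ hc]

/-- With `μ = π • μp + (1 - π) • μm`, `π ∈ [0,1)`, and measurable `f`, `g`
whose tie-free self-comparison probabilities under `μp ⊗ μp` both equal `1/2`: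
`BAUC(f) ≤ BAUC(g) ↔ AUC(f) ≤ AUC(g)`.  In particular, over any family of such scoring
functions, a maximizer of BAUC is also a maximizer of AUC. -/
theorem stmt3 (p : ℕ) (μp μm : Measure (Fin p → ℝ))
    [IsProbabilityMeasure μp] [IsProbabilityMeasure μm]
    (π : ℝ≥0) (hπ : π < 1)
    (μ : Measure (Fin p → ℝ)) (hμ : μ = π • μp + (1 - π) • μm)
    (f g : (Fin p → ℝ) → ℝ) (hf : Measurable f) (hg : Measurable g)
    (hfhalf : (μp.prod μp) {q : (Fin p → ℝ) × (Fin p → ℝ) | f q.1 ≥ f q.2} = 1 / 2)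
    (hghalf : (μp.prod μp) {q : (Fin p → ℝ) × (Fin p → ℝ) | g q.1 ≥ g q.2} = 1 / 2) :
    ((μp.prod μ) {q : (Fin p → ℝ) × (Fin p → ℝ) | f q.1 ≥ f q.2}
        ≤ (μp.prod μ) {q : (Fin p → ℝ) × (Fin p → ℝ) | g q.1 ≥ g q.2}
      ↔ (μp.prod μm) {q : (Fin p → ℝ) × (Fin p → ℝ) | f q.1 ≥ f q.2}
        ≤ (μp.prod μm) {q : (Fin p → ℝ) × (Fin p → ℝ) | g q.1 ≥ g q.2})
    ∧ (∀ F : Set ((Fin p → ℝ) → ℝ),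
        (∀ h ∈ F, Measurable h ∧
          (μp.prod μp) {q : (Fin p → ℝ) × (Fin p → ℝ) | h q.1 ≥ h q.2} = 1 / 2) →
        ∀ f₀ ∈ F,
          (∀ g₀ ∈ F,
            (μp.prod μ) {q : (Fin p → ℝ) × (Fin p → ℝ) | g₀ q.1 ≥ g₀ q.2}
              ≤ (μp.prod μ) {q : (Fin p → ℝ) × (Fin p → ℝ) | f₀ q.1 ≥ f₀ q.2}) →
          ∀ g₀ ∈ F,
            (μp.prod μm) {q : (Fin p → ℝ) × (Fin p → ℝ) | g₀ q.1 ≥ g₀ q.2}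
              ≤ (μp.prod μm) {q : (Fin p → ℝ) × (Fin p → ℝ) | f₀ q.1 ≥ f₀ q.2}) := by
  subst hμ
  -- decomposition of the mixture product measure
  have decomp : ∀ (h : (Fin p → ℝ) → ℝ),
      (μp.prod ((π : ℝ≥0) • μp + (1 - π) • μm))
          {q : (Fin p → ℝ) × (Fin p → ℝ) | h q.1 ≥ h q.2}
        = π * (μp.prod μp) {q : (Fin p → ℝ) × (Fin p → ℝ) | h q.1 ≥ h q.2}
          + (1 - π) * (μp.prod μm) {q : (Fin p → ℝ) × (Fin p → ℝ) | h q.1 ≥ h q.2} := by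
    intro h
    rw [ENNReal.smul_def, ENNReal.smul_def, Measure.prod_add,
      prod_smul_right' _ _ _ ENNReal.coe_ne_top, prod_smul_right' _ _ _ ENNReal.coe_ne_top]
    simp [Measure.smul_apply]
  have hc0 : ((1 - π : ℝ≥0) : ℝ≥0∞) ≠ 0 := by
    simp only [ne_eq, ENNReal.coe_eq_zero]
    exact (tsub_pos_of_lt hπ).ne'
  have hct : ((1 - π : ℝ≥0) : ℝ≥0∞) ≠ ⊤ := ENNReal.coe_ne_top
  have key : ∀ a b : ℝ≥0∞,
      (π : ℝ≥0∞) * (1/2) + (1 - π : ℝ≥0) * a ≤ (π : ℝ≥0∞) * (1/2) + (1 - π : ℝ≥0) * b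
        ↔ a ≤ b := by
    intro a b
    rw [ENNReal.add_le_add_iff_left (ENNReal.mul_ne_top ENNReal.coe_ne_top (by norm_num))]
    exact ENNReal.mul_le_mul_iff_right hc0 hct
  have main : ∀ (h₁ h₂ : (Fin p → ℝ) → ℝ),
      (μp.prod μp) {q : (Fin p → ℝ) × (Fin p → ℝ) | h₁ q.1 ≥ h₁ q.2} = 1 / 2 →
      (μp.prod μp) {q : (Fin p → ℝ) × (Fin p → ℝ) | h₂ q.1 ≥ h₂ q.2} = 1 / 2 →
      ((μp.prod ((π : ℝ≥0) • μp + (1 - π) • μm))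
            {q : (Fin p → ℝ) × (Fin p → ℝ) | h₁ q.1 ≥ h₁ q.2}
          ≤ (μp.prod ((π : ℝ≥0) • μp + (1 - π) • μm))
            {q : (Fin p → ℝ) × (Fin p → ℝ) | h₂ q.1 ≥ h₂ q.2}
        ↔ (μp.prod μm) {q : (Fin p → ℝ) × (Fin p → ℝ) | h₁ q.1 ≥ h₁ q.2}
          ≤ (μp.prod μm) {q : (Fin p → ℝ) × (Fin p → ℝ) | h₂ q.1 ≥ h₂ q.2}) := by
    intro h₁ h₂ hh₁ hh₂
    rw [decomp h₁, decomp h₂, hh₁, hh₂]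
    exact key _ _
  refine ⟨main f g hfhalf hghalf, ?_⟩
  intro F hF f₀ hf₀ hmax g₀ hg₀
  exact (main g₀ f₀ (hF g₀ hg₀).2 (hF f₀ hf₀).2).mp (hmax g₀ hg₀)
end

section
/- Let s ≥ 1 and m ≥ s be natural numbers, and let x : Fin m → ℝ^s be any m points in ℝ^s. Then the number of distinct Boolean vectors (1(⟨w, x₁⟩ ≥ 0), …, 1(⟨w, x_m⟩ ≥ 0)) realized as w ranges over ℝ^s is at most (e·m/s)^s. -/
/-!
Homogeneous halfspaces in a space of dimension `d` shatter at most `d` points: more points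
carry a linear relation `∑ gᵢ xᵢ = 0` with some `gᵢ > 0`, and a functional `f` with
`f xᵢ ≥ 0` exactly where `gᵢ < 0` would make `∑ gᵢ f xᵢ` negative. So the family of
dichotomies has VC dimension at most `s`, and the Sauer–Shelah lemma bounds its size by
`∑_{k ≤ s} C(m, k) ≤ (e m / s)^s`, the last step because
`(s/m)^s ∑_{k ≤ s} C(m, k) ≤ (1 + s/m)^m ≤ e^s`.
-/

open scoped BigOperators

/-- The set of dichotomies induced on the points `x` by homogeneous halfspaces with
normal vectors ranging over `W`. -/
def dichotomies {p m : ℕ} (W : Set (Fin p → ℝ)) (x : Fin m → (Fin p → ℝ)) :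
    Set (Fin m → Bool) :=
  {b | ∃ w ∈ W, ∀ i, b i = decide (0 ≤ ∑ k, w k * x i k)}

open Finset Module

theorem sum_choose_le_exp_mul_div_pow {d m : ℕ} (hd : 0 < d) (hdm : d ≤ m) :
    ∑ k ∈ Iic d, (m.choose k : ℝ) ≤ (Real.exp 1 * m / d) ^ d := by
  have hm : (0 : ℝ) < m := by exact_mod_cast hd.trans_le hdm
  set r : ℝ := d / m with hr
  have hr0 : 0 < r := by positivity
  have hr1 : r ≤ 1 := div_le_one_of_le₀ (by exact_mod_cast hdm) hm.le
  have key : (∑ k ∈ Iic d, (m.choose k : ℝ)) * r ^ d ≤ Real.exp 1 ^ d :=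
    calc (∑ k ∈ Iic d, (m.choose k : ℝ)) * r ^ d
        ≤ ∑ k ∈ Iic d, (m.choose k : ℝ) * r ^ k := by
          rw [sum_mul]
          exact sum_le_sum fun k hk ↦ mul_le_mul_of_nonneg_left
            (pow_le_pow_of_le_one hr0.le hr1 (mem_Iic.1 hk)) (by positivity)
      _ ≤ ∑ k ∈ Iic m, (m.choose k : ℝ) * r ^ k :=
          sum_le_sum_of_subset_of_nonneg (Iic_subset_Iic.2 hdm) fun _ _ _ ↦ by positivity
      _ = (r + 1) ^ m := by
          rw [add_pow, Nat.range_succ_eq_Iic]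
          exact sum_congr rfl fun k _ ↦ by ring
      _ ≤ Real.exp r ^ m := by gcongr; exact Real.add_one_le_exp r
      _ = Real.exp 1 ^ d := by
          rw [← Real.exp_nat_mul, ← Real.exp_nat_mul, hr]
          field_simp
  calc ∑ k ∈ Iic d, (m.choose k : ℝ) ≤ Real.exp 1 ^ d / r ^ d := by
        rwa [le_div_iff₀ (by positivity)]
    _ = (Real.exp 1 * m / d) ^ d := by
        rw [← div_pow, hr]
        field_simp

theorem Finset.card_le_exp_mul_div_pow_of_vcDim_le {α : Type*} [Fintype α] [DecidableEq α]
    {𝒜 : Finset (Finset α)} {d : ℕ} (hd : 0 < d) (hdα : d ≤ Fintype.card α)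
    (h𝒜 : 𝒜.vcDim ≤ d) :
    (#𝒜 : ℝ) ≤ (Real.exp 1 * Fintype.card α / d) ^ d := by
  have hcard : #𝒜 ≤ ∑ k ∈ Iic d, (Fintype.card α).choose k :=
    calc #𝒜 ≤ #𝒜.shatterer := card_le_card_shatterer 𝒜
      _ ≤ ∑ k ∈ Iic 𝒜.vcDim, (Fintype.card α).choose k := card_shatterer_le_sum_vcDim
      _ ≤ ∑ k ∈ Iic d, (Fintype.card α).choose k := sum_le_sum_of_subset (Iic_subset_Iic.2 h𝒜)
  calc (#𝒜 : ℝ) ≤ ∑ k ∈ Iic d, ((Fintype.card α).choose k : ℝ) := by exact_mod_cast hcard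
    _ ≤ _ := sum_choose_le_exp_mul_div_pow hd hdα

section Halfspaces

variable {𝕜 E ι : Type*} [Field 𝕜] [LinearOrder 𝕜] [IsStrictOrderedRing 𝕜]
  [AddCommGroup E] [Module 𝕜 E]

theorem LinearMap.not_forall_neg_iff_nonneg_of_sum_smul_eq_zero (f : E →ₗ[𝕜] 𝕜)
    {x : ι → E} {t : Finset ι} {g : ι → 𝕜} (hg : ∑ i ∈ t, g i • x i = 0)
    {i₀ : ι} (hi₀ : i₀ ∈ t) (hgi₀ : 0 < g i₀) :
    ¬ ∀ i ∈ t, (g i < 0 ↔ 0 ≤ f (x i)) := by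
  intro hf
  have hterm : ∀ i ∈ t, g i * f (x i) ≤ 0 := fun i hi ↦ by
    rcases lt_or_ge (g i) 0 with hgi | hgi
    · exact mul_nonpos_of_nonpos_of_nonneg hgi.le ((hf i hi).1 hgi)
    · exact mul_nonpos_of_nonneg_of_nonpos hgi (not_le.1 (mt (hf i hi).2 hgi.not_gt)).le
  have hterm₀ : g i₀ * f (x i₀) < 0 :=
    mul_neg_of_pos_of_neg hgi₀ (not_le.1 (mt (hf i₀ hi₀).2 hgi₀.not_gt))
  have hsum : ∑ i ∈ t, g i * f (x i) = 0 := by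
    simpa only [map_sum, map_smul, smul_eq_mul, map_zero] using congrArg f hg
  exact (sum_neg' hterm ⟨i₀, hi₀, hterm₀⟩).ne hsum

theorem card_le_finrank_of_forall_subset_exists_linearMap [FiniteDimensional 𝕜 E] {x : ι → E}
    {t : Finset ι} (ht : ∀ u ⊆ t, ∃ f : E →ₗ[𝕜] 𝕜, ∀ i ∈ t, (i ∈ u ↔ 0 ≤ f (x i))) :
    #t ≤ finrank 𝕜 E := by
  classical
  by_contra! hlt
  have hdep : ¬ LinearIndepOn 𝕜 x (t : Set ι) := fun h ↦ by
    have := h.fintype_card_le_finrank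
    simp only [Finset.coe_sort_coe, Fintype.card_coe] at this
    omega
  obtain ⟨g, hg, i₀, hi₀, hgi₀⟩ := not_linearIndepOn_finset_iff.1 hdep
  have hpos : ∃ g : ι → 𝕜, ∑ i ∈ t, g i • x i = 0 ∧ 0 < g i₀ := by
    rcases hgi₀.lt_or_gt with hneg | hgt
    · exact ⟨-g, by simp [neg_smul, sum_neg_distrib, hg], by simpa using hneg⟩
    · exact ⟨g, hg, hgt⟩
  obtain ⟨g, hg, hgi₀⟩ := hpos
  obtain ⟨f, hf⟩ := ht {i ∈ t | g i < 0} (filter_subset _ _)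
  refine f.not_forall_neg_iff_nonneg_of_sum_smul_eq_zero hg hi₀ hgi₀ fun i hi ↦ ?_
  rw [← hf i hi, mem_filter, and_iff_right hi]

theorem vcDim_le_finrank_of_forall_mem_exists_linearMap [FiniteDimensional 𝕜 E] [Fintype ι]
    [DecidableEq ι] {x : ι → E} {𝒜 : Finset (Finset ι)}
    (h𝒜 : ∀ u ∈ 𝒜, ∃ f : E →ₗ[𝕜] 𝕜, ∀ i, (i ∈ u ↔ 0 ≤ f (x i))) :
    𝒜.vcDim ≤ finrank 𝕜 E :=
  Finset.sup_le fun t ht ↦ card_le_finrank_of_forall_subset_exists_linearMap fun u hu ↦ by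
    obtain ⟨v, hv, rfl⟩ := mem_shatterer.1 ht hu
    obtain ⟨f, hf⟩ := h𝒜 v hv
    exact ⟨f, fun i hi ↦ by rw [mem_inter, ← hf i, and_iff_right hi]⟩

end Halfspaces

/-- For `1 ≤ s ≤ m` and any `m` points in ℝ^s, the number of dichotomies
realized by homogeneous halfspaces `x ↦ 1(⟨w, x⟩ ≥ 0)`, `w ∈ ℝ^s`, is at most
`(e·m/s)^s`. -/
theorem stmt6 (s m : ℕ) (hs : 1 ≤ s) (hm : s ≤ m) (x : Fin m → (Fin s → ℝ)) :
    ((dichotomies (Set.univ : Set (Fin s → ℝ)) x).ncard : ℝ)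
      ≤ (Real.exp 1 * m / s) ^ s := by
  classical
  set D := dichotomies (Set.univ : Set (Fin s → ℝ)) x
  let trueSet : (Fin m → Bool) → Finset (Fin m) := fun b ↦ {i | b i}
  have hinj : Function.Injective trueSet := fun b c h ↦ by
    funext i
    simpa [trueSet] using congrArg (i ∈ ·) h
  set 𝒜 := D.toFinite.toFinset.image trueSet
  have hcard : D.ncard = #𝒜 := by
    rw [Set.ncard_eq_toFinset_card _ D.toFinite, card_image_of_injective _ hinj]
  have hvc : 𝒜.vcDim ≤ s := by
    simpa using vcDim_le_finrank_of_forall_mem_exists_linearMap (𝕜 := ℝ) (x := x) fun u hu ↦ by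
      obtain ⟨b, hb, rfl⟩ := mem_image.1 hu
      obtain ⟨w, -, hw⟩ := (Set.Finite.mem_toFinset _).1 hb
      exact ⟨dotProductBilin ℝ ℝ w, fun i ↦ by simp [trueSet, hw i, dotProduct]⟩
  rw [hcard]
  simpa using card_le_exp_mul_div_pow_of_vcDim_le hs (by simpa using hm) hvc
end

section
/- Let 𝒢 be a partition of the coordinate set {1, …, p} into N disjoint nonempty groups, let M = max_{G ∈ 𝒢} |G|, and let 1 ≤ s ≤ N and m ≥ s·M be natural numbers. Let x : Fin m → ℝ^p be any m points. Then the number of distinct Boolean vectors (1(⟨w, x₁⟩ ≥ 0), …, 1(⟨w, x_m⟩ ≥ 0)) realized as w ranges over the group-sparse set {w ∈ ℝ^p : at most s groups G ∈ 𝒢 satisfy w_G ≠ 0} is at most C(N, s)·(e·m/(s·M))^{s·M}, and hence at most N^s·(e·m/(s·M))^{s·M}. -/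
open scoped BigOperators

/-!
For `w` supported on a set `K` of coordinates, the vector `(⟨w, xᵢ⟩)ᵢ` ranges over a subspace of
`ℝ^m` of dimension at most `#K`. The sign patterns of a subspace `L` shatter no set `T` with
`#T > dim L`: the coordinate functionals at `T` then satisfy a relation `∑ aᵢ yᵢ = 0` on `L` with
some `aᵢ > 0`, and a `y ∈ L` that is negative exactly where `aᵢ > 0` on `T` makes every term
`≤ 0` and one of them `< 0`. By Sauer–Shelah there are at most `∑_{k ≤ #K} C(m, k)` patterns, and
`∑_{k ≤ d} C(m, k) ≤ (e m / d)^d` because, for `r = d / m`,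
`r^d ∑_{k ≤ d} C(m, k) ≤ ∑_k C(m, k) r^k = (1 + r)^m ≤ e^d`. A group-sparse `w` is supported on the
union of some `s` groups, which has at most `s M` coordinates, and there are `C(N, s)` ways to
choose the groups.
-/

open Finset Module

section SignPatterns

variable {ι : Type*} [DecidableEq ι]

theorem Submodule.card_le_finrank_of_shatters (L : Submodule ℝ (ι → ℝ)) [FiniteDimensional ℝ L]
    {𝒜 : Finset (Finset ι)} (h𝒜 : ∀ u ∈ 𝒜, ∃ y ∈ L, ∀ i, i ∈ u ↔ 0 ≤ y i)
    {T : Finset ι} (hT : 𝒜.Shatters T) : #T ≤ finrank ℝ L := by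
  let e : ι → L →ₗ[ℝ] ℝ := fun i => LinearMap.proj i ∘ₗ L.subtype
  have nonpos : ∀ f : ι → ℝ, ∑ i ∈ T, f i • e i = 0 → ∀ i ∈ T, f i ≤ 0 := by
    intro f hf
    obtain ⟨u, hu, hTu⟩ := hT (filter_subset (fun i => f i ≤ 0) T)
    obtain ⟨y, hyL, hyu⟩ := h𝒜 u hu
    have hsign : ∀ i ∈ T, 0 ≤ y i ↔ f i ≤ 0 := fun i hi => by
      simpa [← hyu, hi] using congrArg (i ∈ ·) hTu
    have hterm : ∀ i ∈ T, f i * y i ≤ 0 := fun i hi => by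
      by_cases hfi : f i ≤ 0
      · exact mul_nonpos_of_nonpos_of_nonneg hfi ((hsign i hi).2 hfi)
      · exact (mul_neg_of_pos_of_neg (not_le.1 hfi) (not_le.1 (mt (hsign i hi).1 hfi))).le
    have hsum : ∑ i ∈ T, f i * y i = 0 := by
      simpa [e] using congrArg (fun φ : L →ₗ[ℝ] ℝ => φ ⟨y, hyL⟩) hf
    intro i hi
    by_contra hfi
    have hzero := (sum_eq_zero_iff_of_nonpos hterm).1 hsum i hi
    exact (mul_neg_of_pos_of_neg (not_le.1 hfi) (not_le.1 (mt (hsign i hi).1 hfi))).ne hzero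
  have hindep : LinearIndepOn ℝ e (T : Set ι) := linearIndepOn_finset_iff.2 fun f hf i hi =>
    le_antisymm (nonpos f hf i hi) (neg_nonpos.1 (nonpos (-f) (by
      simp only [Pi.neg_apply, neg_smul (M := L →ₗ[ℝ] ℝ), sum_neg_distrib, hf, neg_zero]) i hi))
  simpa [Subspace.dual_finrank_eq] using hindep.linearIndependent.fintype_card_le_finrank

theorem Submodule.ncard_signPatterns_le [Fintype ι] (L : Submodule ℝ (ι → ℝ))
    [FiniteDimensional ℝ L] :
    {b : ι → Bool | ∃ y ∈ L, ∀ i, b i = decide (0 ≤ y i)}.ncard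
      ≤ ∑ k ∈ Iic (finrank ℝ L), (Fintype.card ι).choose k := by
  classical
  let 𝒜 : Finset (Finset ι) := univ.filter fun u => ∃ y ∈ L, ∀ i, i ∈ u ↔ 0 ≤ y i
  have hsub : {b : ι → Bool | ∃ y ∈ L, ∀ i, b i = decide (0 ≤ y i)}
      ⊆ (fun u i => decide (i ∈ u)) '' (𝒜 : Set (Finset ι)) := by
    rintro b ⟨y, hyL, hb⟩
    refine ⟨univ.filter (b · = true), ?_, funext fun i => by simp⟩
    simpa [𝒜] using ⟨y, hyL, fun i => by simp [hb i]⟩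
  have h𝒜 : ∀ u ∈ 𝒜, ∃ y ∈ L, ∀ i, i ∈ u ↔ 0 ≤ y i := fun u hu => by simpa [𝒜] using hu
  have hvc : 𝒜.vcDim ≤ finrank ℝ L :=
    Finset.sup_le fun T hT => L.card_le_finrank_of_shatters h𝒜 (mem_shatterer.1 hT)
  calc _ ≤ ((fun u i => decide (i ∈ u)) '' (𝒜 : Set (Finset ι))).ncard :=
        Set.ncard_le_ncard hsub (Set.toFinite _)
    _ ≤ #𝒜 := by simpa using Set.ncard_image_le (f := fun u i => decide (i ∈ u)) 𝒜.finite_toSet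
    _ ≤ #𝒜.shatterer := card_le_card_shatterer 𝒜
    _ ≤ ∑ k ∈ Iic 𝒜.vcDim, (Fintype.card ι).choose k := card_shatterer_le_sum_vcDim
    _ ≤ _ := sum_le_sum_of_subset (Iic_subset_Iic.2 hvc)

end SignPatterns

section GroupSparse

variable {α R : Type*} [DecidableEq α] [Zero R] [DecidableEq R]

theorem setOf_card_activeGroups_le_subset_biUnion {𝒢 : Finset (Finset α)}
    (hcover : ∀ i, ∃ G ∈ 𝒢, i ∈ G) {s : ℕ} (hs : s ≤ #𝒢) :
    {w : α → R | #(𝒢.filter fun G => ∃ i ∈ G, w i ≠ 0) ≤ s}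
      ⊆ ⋃ S ∈ 𝒢.powersetCard s, {w | ∀ i ∉ S.biUnion id, w i = 0} := by
  intro w hw
  obtain ⟨S, hactive, hS𝒢, hScard⟩ := exists_subsuperset_card_eq (filter_subset _ 𝒢) hw hs
  simp only [Set.mem_iUnion, exists_prop, mem_powersetCard]
  refine ⟨S, ⟨hS𝒢, hScard⟩, fun i hi => ?_⟩
  by_contra hwi
  obtain ⟨G, hG, hiG⟩ := hcover i
  exact hi (mem_biUnion.2 ⟨G, hactive (mem_filter.2 ⟨hG, i, hiG, hwi⟩), hiG⟩)

end GroupSparse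

theorem sum_Iic_choose_le_exp_mul_div_pow {d m : ℕ} (hdm : d ≤ m) :
    ∑ k ∈ Iic d, (m.choose k : ℝ) ≤ (Real.exp 1 * m / d) ^ d := by
  rcases d.eq_zero_or_pos with rfl | hd
  · rw [pow_zero, ← bot_eq_zero, Iic_bot]
    simp
  have hm : (0 : ℝ) < m := by exact_mod_cast hd.trans_le hdm
  set r : ℝ := d / m with hr
  have hr0 : 0 < r := by positivity
  have hr1 : r ≤ 1 := div_le_one_of_le₀ (by exact_mod_cast hdm) hm.le
  have key : (∑ k ∈ Iic d, (m.choose k : ℝ)) * r ^ d ≤ Real.exp 1 ^ d := calc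
    _ ≤ ∑ k ∈ Iic d, (m.choose k : ℝ) * r ^ k := by
        rw [sum_mul]
        exact sum_le_sum fun k hk => mul_le_mul_of_nonneg_left
          (pow_le_pow_of_le_one hr0.le hr1 (mem_Iic.1 hk)) (by positivity)
    _ ≤ ∑ k ∈ range (m + 1), (m.choose k : ℝ) * r ^ k :=
        sum_le_sum_of_subset_of_nonneg (fun k hk => by simp only [mem_Iic, mem_range] at *; omega)
          fun _ _ _ => by positivity
    _ = (r + 1) ^ m := by simp [add_pow, mul_comm]
    _ ≤ Real.exp r ^ m := by gcongr; exact Real.add_one_le_exp r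
    _ = Real.exp 1 ^ d := by
        rw [← Real.exp_nat_mul, Real.exp_one_pow, hr, mul_div_cancel₀ _ hm.ne']
  calc _ ≤ Real.exp 1 ^ d / r ^ d := (le_div_iff₀ (by positivity)).2 key
    _ = _ := by rw [← div_pow, hr, div_div_eq_mul_div]

section Dichotomies

variable {p m : ℕ}

theorem dichotomies_mono {W W' : Set (Fin p → ℝ)} (h : W ⊆ W') (x : Fin m → Fin p → ℝ) :
    dichotomies W x ⊆ dichotomies W' x := fun _ ⟨w, hw, hb⟩ => ⟨w, h hw, hb⟩

theorem dichotomies_iUnion {κ : Sort*} (W : κ → Set (Fin p → ℝ)) (x : Fin m → Fin p → ℝ) :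
    dichotomies (⋃ S, W S) x = ⋃ S, dichotomies (W S) x := by
  ext b
  simp only [dichotomies, Set.mem_iUnion, Set.mem_ofPred_eq]
  grind

theorem ncard_dichotomies_supported_le (K : Finset (Fin p)) (x : Fin m → Fin p → ℝ) :
    (dichotomies {w | ∀ i ∉ K, w i = 0} x).ncard ≤ ∑ k ∈ Iic #K, m.choose k := by
  let A : Matrix (Fin m) K ℝ := Matrix.of fun i k => x i k
  have hsub : dichotomies {w | ∀ i ∉ K, w i = 0} x
      ⊆ {b | ∃ y ∈ LinearMap.range A.mulVecLin, ∀ i, b i = decide (0 ≤ y i)} := by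
    rintro b ⟨w, hw, hb⟩
    refine ⟨A.mulVec fun k => w k, LinearMap.mem_range_self A.mulVecLin _, fun i => ?_⟩
    have hsupp : ∑ k, w k * x i k = ∑ k ∈ K, w k * x i k :=
      (sum_subset (subset_univ K) fun k _ hk => by rw [hw k hk, zero_mul]).symm
    have hval : A.mulVec (fun k => w k) i = ∑ k, w k * x i k := by
      rw [hsupp, ← sum_coe_sort K]
      simp [A, Matrix.mulVec, dotProduct, mul_comm]
    rw [hb i, hval]
  calc _ ≤ _ := Set.ncard_le_ncard hsub (Set.toFinite _)
    _ ≤ ∑ k ∈ Iic A.rank, (Fintype.card (Fin m)).choose k :=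
        (LinearMap.range A.mulVecLin).ncard_signPatterns_le
    _ ≤ _ := by
        rw [Fintype.card_fin]
        exact sum_le_sum_of_subset (Iic_subset_Iic.2 (A.rank_le_card_width.trans_eq (by simp)))

theorem ncard_dichotomies_groupSparse_le {𝒢 : Finset (Finset (Fin p))}
    (hcover : ∀ i, ∃ G ∈ 𝒢, i ∈ G) {s : ℕ} (hs : s ≤ #𝒢) (x : Fin m → Fin p → ℝ) :
    (dichotomies {w : Fin p → ℝ | #(𝒢.filter fun G => ∃ i ∈ G, w i ≠ 0) ≤ s} x).ncard
      ≤ (#𝒢).choose s * ∑ k ∈ Iic (s * 𝒢.sup card), m.choose k := by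
  calc _ ≤ (⋃ S ∈ 𝒢.powersetCard s, dichotomies {w | ∀ i ∉ S.biUnion id, w i = 0} x).ncard := by
        simp only [← dichotomies_iUnion]
        refine Set.ncard_le_ncard (dichotomies_mono ?_ x) (Set.toFinite _)
        -- on `Fin p` the filter's decidability instance is not the generic one
        convert setOf_card_activeGroups_le_subset_biUnion (R := ℝ) hcover hs
    _ ≤ ∑ S ∈ 𝒢.powersetCard s, (dichotomies {w | ∀ i ∉ S.biUnion id, w i = 0} x).ncard :=
        set_ncard_biUnion_le _ _
    _ ≤ ∑ S ∈ 𝒢.powersetCard s, ∑ k ∈ Iic (s * 𝒢.sup card), m.choose k := by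
        refine sum_le_sum fun S hS => (ncard_dichotomies_supported_le _ x).trans ?_
        obtain ⟨hS𝒢, rfl⟩ := mem_powersetCard.1 hS
        exact sum_le_sum_of_subset (Iic_subset_Iic.2
          (card_biUnion_le_card_mul S id _ fun G hG => le_sup (hS𝒢 hG)))
    _ = _ := by rw [sum_const, card_powersetCard, smul_eq_mul]

end Dichotomies

theorem stmt8_general (p N M s m : ℕ) (𝒢 : Finset (Finset (Fin p)))
    (hN : 𝒢.card = N)
    (hcover : ∀ i : Fin p, ∃ G ∈ 𝒢, i ∈ G)
    (hM : M = 𝒢.sup Finset.card)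
    (hsN : s ≤ N) (hm : s * M ≤ m)
    (x : Fin m → (Fin p → ℝ)) :
    (((dichotomies {w : Fin p → ℝ |
        (𝒢.filter fun G => ∃ i ∈ G, w i ≠ 0).card ≤ s} x).ncard : ℝ)
      ≤ (N.choose s : ℝ) * (Real.exp 1 * m / (s * M)) ^ (s * M))
    ∧ (((dichotomies {w : Fin p → ℝ |
        (𝒢.filter fun G => ∃ i ∈ G, w i ≠ 0).card ≤ s} x).ncard : ℝ)
      ≤ (N : ℝ) ^ s * (Real.exp 1 * m / (s * M)) ^ (s * M)) := by
  subst hN hM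
  have hcount := ncard_dichotomies_groupSparse_le hcover hsN x
  have htail := sum_Iic_choose_le_exp_mul_div_pow hm
  push_cast at htail
  have hbound : ((dichotomies {w : Fin p → ℝ |
      (𝒢.filter fun G => ∃ i ∈ G, w i ≠ 0).card ≤ s} x).ncard : ℝ)
      ≤ ((#𝒢).choose s : ℝ) * (Real.exp 1 * m / (s * 𝒢.sup card)) ^ (s * 𝒢.sup card) := calc
    _ ≤ (((#𝒢).choose s * ∑ k ∈ Iic (s * 𝒢.sup card), m.choose k : ℕ) : ℝ) := by
        exact_mod_cast hcount
    _ ≤ _ := by push_cast; gcongr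
  have hchoose : ((#𝒢).choose s : ℝ) ≤ (#𝒢 : ℝ) ^ s := by exact_mod_cast Nat.choose_le_pow _ _
  exact ⟨hbound, hbound.trans (by gcongr)⟩

/-- Let `𝒢` partition `{1,…,p}` into `N` disjoint nonempty groups of maximal
size `M`, let `1 ≤ s ≤ N` and `m ≥ s·M`.  The number of dichotomies realized by
`x ↦ 1(⟨w, x⟩ ≥ 0)` as `w` ranges over the group-sparse set (at most `s` groups with a
nonzero coordinate) is at most `C(N, s)·(e·m/(s·M))^(s·M)`, and hence at most
`N^s·(e·m/(s·M))^(s·M)`. -/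
theorem stmt8 (p N M s m : ℕ) (𝒢 : Finset (Finset (Fin p)))
    (hN : 𝒢.card = N)
    (hne : ∀ G ∈ 𝒢, G.Nonempty)
    (hdisj : ∀ G ∈ 𝒢, ∀ G' ∈ 𝒢, G ≠ G' → Disjoint G G')
    (hcover : ∀ i : Fin p, ∃ G ∈ 𝒢, i ∈ G)
    (hM : M = 𝒢.sup Finset.card)
    (hs : 1 ≤ s) (hsN : s ≤ N) (hm : s * M ≤ m)
    (x : Fin m → (Fin p → ℝ)) :
    (((dichotomies {w : Fin p → ℝ |
        (𝒢.filter fun G => ∃ i ∈ G, w i ≠ 0).card ≤ s} x).ncard : ℝ)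
      ≤ (N.choose s : ℝ) * (Real.exp 1 * m / (s * M)) ^ (s * M))
    ∧ (((dichotomies {w : Fin p → ℝ |
        (𝒢.filter fun G => ∃ i ∈ G, w i ≠ 0).card ≤ s} x).ncard : ℝ)
      ≤ (N : ℝ) ^ s * (Real.exp 1 * m / (s * M)) ^ (s * M)) :=
  stmt8_general p N M s m 𝒢 hN hcover hM hsN hm x
end

section
/- Let 𝒢 be a partition of the coordinate set {1, …, p} into disjoint nonempty groups, and for each G ∈ 𝒢 let s_G be a natural number with 1 ≤ s_G ≤ |G|; set T = Σ_{G ∈ 𝒢} s_G. Let m ≥ T and let x : Fin m → ℝ^p be any m points. Then the number of distinct Boolean vectors (1(⟨w, x₁⟩ ≥ 0), …, 1(⟨w, x_m⟩ ≥ 0)) realized as w ranges over the exclusive-sparse set {w ∈ ℝ^p : ‖w_G‖₀ ≤ s_G for every G ∈ 𝒢} is at most (e·m/T)^T · ∏_{G ∈ 𝒢} C(|G|, s_G), and hence at most (e·m/T)^T · ∏_{G ∈ 𝒢} |G|^{s_G}. -/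
open scoped BigOperators

open Finset in
lemma aux_sum_choose_le (T m : ℕ) (h : T ≤ m) :
    (∑ k ∈ Finset.Iic T, (m.choose k : ℝ)) ≤ (Real.exp 1 * m / T) ^ T := by
  rcases Nat.eq_zero_or_pos T with hT0 | hT1
  · subst hT0; rw [show Finset.Iic 0 = {0} by rfl]; simp
  have hm1 : 1 ≤ m := hT1.trans_le h
  have hmR : (0:ℝ) < m := by exact_mod_cast hm1
  have hTR : (0:ℝ) < T := by exact_mod_cast hT1
  set r : ℝ := (T:ℝ) / m with hr
  have hr0 : 0 < r := div_pos hTR hmR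
  have hr1 : r ≤ 1 := by
    rw [hr, div_le_one hmR]; exact_mod_cast h
  have key : (∑ k ∈ Finset.Iic T, (m.choose k : ℝ)) * r ^ T
      ≤ Real.exp T := by
    have h1 : (∑ k ∈ Finset.Iic T, (m.choose k : ℝ)) * r ^ T
        ≤ ∑ k ∈ Finset.Iic T, (m.choose k : ℝ) * r ^ k := by
      rw [Finset.sum_mul]
      refine Finset.sum_le_sum fun k hk => ?_
      have : r ^ T ≤ r ^ k :=
        pow_le_pow_of_le_one hr0.le hr1 (Finset.mem_Iic.1 hk)
      exact mul_le_mul_of_nonneg_left this (Nat.cast_nonneg _)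
    have h2 : ∑ k ∈ Finset.Iic T, (m.choose k : ℝ) * r ^ k
        ≤ ∑ k ∈ Finset.range (m+1), (m.choose k : ℝ) * r ^ k := by
      refine Finset.sum_le_sum_of_subset_of_nonneg ?_ fun k _ _ =>
        mul_nonneg (Nat.cast_nonneg _) (pow_nonneg hr0.le _)
      intro k hk
      simp only [Finset.mem_Iic] at hk
      exact Finset.mem_range.2 (Nat.lt_succ_of_le (hk.trans h))
    have h3 : ∑ k ∈ Finset.range (m+1), (m.choose k : ℝ) * r ^ k = (r + 1) ^ m := by
      rw [add_pow]
      refine Finset.sum_congr rfl fun k _ => by ring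
    have h4 : (r + 1) ^ m ≤ Real.exp r ^ m := by
      refine pow_le_pow_left₀ (by linarith) ?_ m
      linarith [Real.add_one_le_exp r]
    have h5 : Real.exp r ^ m = Real.exp (T:ℝ) := by
      rw [← Real.exp_nat_mul, hr]
      congr 1
      field_simp
    calc _ ≤ _ := h1
      _ ≤ _ := h2
      _ = _ := h3
      _ ≤ _ := h4
      _ = _ := h5
  have hrT : (0:ℝ) < r ^ T := pow_pos hr0 _
  rw [← le_div_iff₀ hrT] at key
  refine key.trans_eq ?_
  rw [mul_div_assoc, mul_pow, Real.exp_one_pow, hr, ← inv_div (m:ℝ) (T:ℝ), inv_pow, div_eq_mul_inv, inv_inv]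


lemma aux_no_shatter {p m : ℕ} (S : Finset (Fin p)) (x : Fin m → Fin p → ℝ)
    (𝒜 : Finset (Finset (Fin m)))
    (h𝒜 : ∀ A ∈ 𝒜, ∃ w : Fin p → ℝ, (∀ i, i ∉ S → w i = 0) ∧
      (∀ i, i ∈ A ↔ 0 ≤ ∑ k, w k * x i k))
    (s : Finset (Fin m)) (hs : 𝒜.Shatters s) : s.card ≤ S.card := by
  classical
  by_contra hlt
  push_neg at hlt
  -- the restricted vectors are linearly dependent
  set v : ↥s → (↥S → ℝ) := fun i k => x i k with hv
  have hnli : ¬ LinearIndependent ℝ v := by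
    intro hli
    have := hli.fintype_card_le_finrank
    rw [Module.finrank_pi, Fintype.card_coe, Fintype.card_coe] at this
    omega
  obtain ⟨a, hsum, i₀, hi₀⟩ := Fintype.not_linearIndependent_iff.1 hnli
  -- normalize so that some coefficient is positive
  obtain ⟨a, hsum, i₀, hi₀⟩ :
      ∃ a : ↥s → ℝ, (∑ i, a i • v i = 0) ∧ ∃ i₀, 0 < a i₀ := by
    rcases hi₀.lt_or_gt with hneg | hpos
    · refine ⟨-a, ?_, i₀, by simpa using hneg⟩
      simp only [Pi.neg_apply, neg_smul, Finset.sum_neg_distrib, hsum, neg_zero]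
    · exact ⟨a, hsum, i₀, hpos⟩
  have hsum' : ∀ k ∈ S, ∑ i ∈ s.attach, a i * x i k = 0 := by
    intro k hk
    have := congrFun hsum ⟨k, hk⟩
    simpa [v, Finset.sum_apply] using this
  set t : Finset (Fin m) := s.filter (fun i => ∃ h : i ∈ s, a ⟨i, h⟩ < 0) with ht
  have hts : t ⊆ s := Finset.filter_subset _ s
  obtain ⟨A, hA𝒜, hAt⟩ := hs hts
  obtain ⟨w, hw0, hwA⟩ := h𝒜 A hA𝒜
  have hmemA : ∀ i : ↥s, (↑i ∈ A ↔ a i < 0) := by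
    intro i
    have h1 : (↑i ∈ t) ↔ a i < 0 := by
      rw [ht, Finset.mem_filter]
      constructor
      · rintro ⟨-, h, hlt⟩; convert hlt
      · intro h; exact ⟨i.2, i.2, h⟩
    rw [← h1, ← hAt, Finset.mem_inter]
    exact ⟨fun h => ⟨i.2, h⟩, fun h => h.2⟩
  have hinner : ∀ i : Fin m, (∑ k, w k * x i k) = ∑ k ∈ S, w k * x i k := by
    intro i
    rw [eq_comm]
    apply Finset.sum_subset (Finset.subset_univ S)
    intro k _ hk
    rw [hw0 k hk, zero_mul]
  have hzero : ∑ i ∈ s.attach, a i * (∑ k, w k * x (↑i) k) = 0 := by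
    simp_rw [hinner, Finset.mul_sum]
    rw [Finset.sum_comm]
    refine Finset.sum_eq_zero fun k hk => ?_
    have := hsum' k hk
    calc ∑ i ∈ s.attach, a i * (w k * x (↑i) k)
        = w k * ∑ i ∈ s.attach, a i * x (↑i) k := by
          rw [Finset.mul_sum]; refine Finset.sum_congr rfl fun i _ => by ring
      _ = 0 := by rw [this, mul_zero]
  have hneg : ∑ i ∈ s.attach, a i * (∑ k, w k * x (↑i) k) < 0 := by
    have hle : ∀ i ∈ s.attach, a i * (∑ k, w k * x (↑i) k) ≤ 0 := by
      intro i _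
      rcases lt_trichotomy (a i) 0 with h | h | h
      · have : (0:ℝ) ≤ ∑ k, w k * x (↑i) k := (hwA ↑i).1 ((hmemA i).2 h)
        exact mul_nonpos_of_nonpos_of_nonneg h.le this
      · rw [h, zero_mul]
      · have hnot : ¬ (0:ℝ) ≤ ∑ k, w k * x (↑i) k := by
          intro hge
          exact absurd ((hmemA i).1 ((hwA ↑i).2 hge)) (not_lt_of_gt h)
        push_neg at hnot
        exact (mul_neg_of_pos_of_neg h hnot).le
    have hstrict : a i₀ * (∑ k, w k * x (↑i₀) k) < 0 := by
      have hnot : ¬ (0:ℝ) ≤ ∑ k, w k * x (↑i₀) k := by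
        intro hge
        exact absurd ((hmemA i₀).1 ((hwA ↑i₀).2 hge)) (not_lt_of_gt hi₀)
      push_neg at hnot
      exact mul_neg_of_pos_of_neg hi₀ hnot
    calc ∑ i ∈ s.attach, a i * (∑ k, w k * x (↑i) k)
        < ∑ i ∈ s.attach, (0:ℝ) :=
          Finset.sum_lt_sum hle ⟨i₀, Finset.mem_attach _ _, hstrict⟩
      _ = 0 := Finset.sum_const_zero
  rw [hzero] at hneg
  exact lt_irrefl 0 hneg

lemma aux_support_bound {p m : ℕ} (S : Finset (Fin p)) (x : Fin m → Fin p → ℝ) :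
    (dichotomies {w : Fin p → ℝ | ∀ i, i ∉ S → w i = 0} x).ncard
      ≤ ∑ k ∈ Finset.Iic S.card, m.choose k := by
  classical
  set D := dichotomies {w : Fin p → ℝ | ∀ i, i ∉ S → w i = 0} x with hD
  have hfin : D.Finite := Set.toFinite _
  set F : Finset (Fin m → Bool) := hfin.toFinset with hF
  have hcard : D.ncard = F.card := by
    rw [hF, ← Set.ncard_coe_finset, Set.Finite.coe_toFinset]
  set 𝒜 : Finset (Finset (Fin m)) :=
    F.image (fun b => Finset.univ.filter fun i => b i = true) with h𝒜def
  have hinj : Function.Injective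
      (fun b : Fin m → Bool => Finset.univ.filter fun i => b i = true) := by
    intro b b' h
    funext i
    have := Finset.ext_iff.1 h i
    simp only [Finset.mem_filter, Finset.mem_univ, true_and] at this
    exact Bool.eq_iff_iff.2 this
  have hcard2 : 𝒜.card = F.card := Finset.card_image_of_injective _ hinj
  have h𝒜 : ∀ A ∈ 𝒜, ∃ w : Fin p → ℝ, (∀ i, i ∉ S → w i = 0) ∧
      (∀ i, i ∈ A ↔ 0 ≤ ∑ k, w k * x i k) := by
    intro A hA
    rw [h𝒜def, Finset.mem_image] at hA
    obtain ⟨b, hb, rfl⟩ := hA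
    rw [hF, Set.Finite.mem_toFinset] at hb
    obtain ⟨w, hw, hbw⟩ := hb
    refine ⟨w, hw, fun i => ?_⟩
    simp only [Finset.mem_filter, Finset.mem_univ, true_and, hbw i, decide_eq_true_eq]
  have hvc : 𝒜.vcDim ≤ S.card := by
    apply Finset.sup_le
    intro s hs
    rw [Finset.mem_shatterer] at hs
    exact aux_no_shatter S x 𝒜 h𝒜 s hs
  calc D.ncard = 𝒜.card := by rw [hcard, hcard2]
    _ ≤ 𝒜.shatterer.card := Finset.card_le_card_shatterer 𝒜
    _ ≤ ∑ k ∈ Finset.Iic 𝒜.vcDim, (Fintype.card (Fin m)).choose k :=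
        Finset.card_shatterer_le_sum_vcDim
    _ ≤ ∑ k ∈ Finset.Iic S.card, m.choose k := by
        rw [Fintype.card_fin]
        exact Finset.sum_le_sum_of_subset (Finset.Iic_subset_Iic.2 hvc)

/-- Let `𝒢` partition `{1,…,p}` into disjoint nonempty groups, with budgets
`1 ≤ s_G ≤ |G|` and `T = Σ_G s_G`, and let `m ≥ T`.  The number of dichotomies realized
by `x ↦ 1(⟨w, x⟩ ≥ 0)` as `w` ranges over the exclusive-sparse set
`{w : ‖w_G‖₀ ≤ s_G for all G ∈ 𝒢}` is at most `(e·m/T)^T · ∏_G C(|G|, s_G)`, and hence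
at most `(e·m/T)^T · ∏_G |G|^{s_G}`. -/
theorem stmt9 (p m T : ℕ) (𝒢 : Finset (Finset (Fin p)))
    (sG : Finset (Fin p) → ℕ)
    (hne : ∀ G ∈ 𝒢, G.Nonempty)
    (hdisj : ∀ G ∈ 𝒢, ∀ G' ∈ 𝒢, G ≠ G' → Disjoint G G')
    (hcover : ∀ i : Fin p, ∃ G ∈ 𝒢, i ∈ G)
    (hsG : ∀ G ∈ 𝒢, 1 ≤ sG G ∧ sG G ≤ G.card)
    (hT : T = ∑ G ∈ 𝒢, sG G) (hm : T ≤ m)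
    (x : Fin m → (Fin p → ℝ)) :
    (((dichotomies {w : Fin p → ℝ |
        ∀ G ∈ 𝒢, (G.filter fun i => w i ≠ 0).card ≤ sG G} x).ncard : ℝ)
      ≤ (Real.exp 1 * m / T) ^ T * ∏ G ∈ 𝒢, ((G.card.choose (sG G) : ℝ)))
    ∧ (((dichotomies {w : Fin p → ℝ |
        ∀ G ∈ 𝒢, (G.filter fun i => w i ≠ 0).card ≤ sG G} x).ncard : ℝ)
      ≤ (Real.exp 1 * m / T) ^ T * ∏ G ∈ 𝒢, ((G.card : ℝ) ^ (sG G))) := by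

  classical
  set W : Set (Fin p → ℝ) :=
    {w : Fin p → ℝ | ∀ G ∈ 𝒢, (G.filter fun i => w i ≠ 0).card ≤ sG G} with hW
  set 𝒮 : Finset (Finset (Fin p)) :=
    (𝒢.pi fun G => G.powersetCard (sG G)).image
      (fun f => 𝒢.attach.biUnion fun G => f G.1 G.2) with h𝒮
  have h𝒮card : 𝒮.card ≤ ∏ G ∈ 𝒢, (G.card).choose (sG G) := by
    refine Finset.card_image_le.trans ?_
    rw [Finset.card_pi]
    exact le_of_eq (Finset.prod_congr rfl fun G hG => Finset.card_powersetCard _ _)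
  have hScard : ∀ S ∈ 𝒮, S.card = T := by
    intro S hS
    rw [h𝒮, Finset.mem_image] at hS
    obtain ⟨f, hf, rfl⟩ := hS
    rw [Finset.mem_pi] at hf
    rw [Finset.card_biUnion]
    · rw [hT, ← Finset.sum_attach 𝒢 (fun G => sG G)]
      exact Finset.sum_congr rfl fun G _ =>
        (Finset.mem_powersetCard.1 (hf G.1 G.2)).2
    · intro G hG G' hG' hne'
      have h1 := (Finset.mem_powersetCard.1 (hf G.1 G.2)).1
      have h2 := (Finset.mem_powersetCard.1 (hf G'.1 G'.2)).1
      exact Disjoint.mono h1 h2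
        (hdisj G.1 G.2 G'.1 G'.2 (fun h => hne' (Subtype.ext h)))
  have hcover' : ∀ b ∈ dichotomies W x,
      ∃ S ∈ 𝒮, b ∈ dichotomies {w : Fin p → ℝ | ∀ i, i ∉ S → w i = 0} x := by
    rintro b ⟨w, hwW, hb⟩
    have hch : ∀ G (hG : G ∈ 𝒢), ∃ u, (G.filter fun i => w i ≠ 0) ⊆ u ∧
        u ∈ G.powersetCard (sG G) := by
      intro G hG
      obtain ⟨u, hu1, hu2, hu3⟩ := Finset.exists_subsuperset_card_eq
        (Finset.filter_subset (fun i => w i ≠ 0) G) (hwW G hG) (hsG G hG).2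
      exact ⟨u, hu1, Finset.mem_powersetCard.2 ⟨hu2, hu3⟩⟩
    choose u hu1 hu2 using hch
    refine ⟨𝒢.attach.biUnion (fun G => u G.1 G.2), ?_, ?_⟩
    · rw [h𝒮, Finset.mem_image]
      exact ⟨fun G hG => u G hG, Finset.mem_pi.2 hu2, rfl⟩
    · refine ⟨w, ?_, hb⟩
      intro i hi
      by_contra hwi
      apply hi
      obtain ⟨G, hG, hiG⟩ := hcover i
      refine Finset.mem_biUnion.2 ⟨⟨G, hG⟩, Finset.mem_attach _ _, ?_⟩
      exact hu1 G hG (Finset.mem_filter.2 ⟨hiG, hwi⟩)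
  -- counting
  have hDfin : (dichotomies W x).Finite := Set.toFinite _
  have hkey : (dichotomies W x).ncard ≤ 𝒮.card * ∑ k ∈ Finset.Iic T, m.choose k := by
    have hsub : hDfin.toFinset ⊆ 𝒮.biUnion (fun S =>
        (Set.toFinite (dichotomies {w : Fin p → ℝ | ∀ i, i ∉ S → w i = 0} x)).toFinset) := by
      intro b hb
      rw [Set.Finite.mem_toFinset] at hb
      obtain ⟨S, hS, hbS⟩ := hcover' b hb
      exact Finset.mem_biUnion.2 ⟨S, hS, (Set.Finite.mem_toFinset _).2 hbS⟩
    calc (dichotomies W x).ncard = hDfin.toFinset.card := by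
          rw [← Set.ncard_coe_finset, Set.Finite.coe_toFinset]
      _ ≤ (𝒮.biUnion (fun S =>
            (Set.toFinite (dichotomies {w : Fin p → ℝ | ∀ i, i ∉ S → w i = 0} x)).toFinset)).card :=
          Finset.card_le_card hsub
      _ ≤ ∑ S ∈ 𝒮, ((Set.toFinite (dichotomies
            {w : Fin p → ℝ | ∀ i, i ∉ S → w i = 0} x)).toFinset).card :=
          Finset.card_biUnion_le
      _ ≤ ∑ S ∈ 𝒮, ∑ k ∈ Finset.Iic T, m.choose k := by
          refine Finset.sum_le_sum fun S hS => ?_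
          have := aux_support_bound S x
          rw [hScard S hS] at this
          refine le_trans (le_of_eq ?_) this
          rw [← Set.ncard_coe_finset, Set.Finite.coe_toFinset]
      _ = 𝒮.card * ∑ k ∈ Finset.Iic T, m.choose k := by
          rw [Finset.sum_const, smul_eq_mul]
  have hsum := aux_sum_choose_le T m hm
  have hprodnn : (0:ℝ) ≤ ∏ G ∈ 𝒢, ((G.card.choose (sG G) : ℝ)) :=
    Finset.prod_nonneg fun G _ => Nat.cast_nonneg _
  have hpownn : (0:ℝ) ≤ (Real.exp 1 * m / T) ^ T :=
    pow_nonneg (div_nonneg (mul_nonneg (Real.exp_pos 1).le (Nat.cast_nonneg m))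
      (Nat.cast_nonneg T)) T
  have hfirst : ((dichotomies W x).ncard : ℝ)
      ≤ (Real.exp 1 * m / T) ^ T * ∏ G ∈ 𝒢, ((G.card.choose (sG G) : ℝ)) := by
    calc ((dichotomies W x).ncard : ℝ)
        ≤ (𝒮.card : ℝ) * (∑ k ∈ Finset.Iic T, m.choose k : ℕ) := by
          exact_mod_cast hkey
      _ ≤ (∏ G ∈ 𝒢, ((G.card.choose (sG G) : ℝ))) * (Real.exp 1 * m / T) ^ T := by
          refine mul_le_mul ?_ ?_ (Nat.cast_nonneg _) hprodnn
          · rw [← Nat.cast_prod]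
            exact_mod_cast h𝒮card
          · rw [Nat.cast_sum]
            exact hsum
      _ = (Real.exp 1 * m / T) ^ T * ∏ G ∈ 𝒢, ((G.card.choose (sG G) : ℝ)) :=
          mul_comm _ _
  refine ⟨hfirst, hfirst.trans ?_⟩
  refine mul_le_mul_of_nonneg_left ?_ hpownn
  refine Finset.prod_le_prod (fun G _ => Nat.cast_nonneg _) fun G _ => ?_
  rw [← Nat.cast_pow]
  exact_mod_cast Nat.choose_le_pow (G.card) (sG G)
end
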